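/- arXiv:2210.06317 — 3 statements merged into one kernel-verified Lean document; each statement's English description precedes it below -/
import Mathlib

section
/- Let G be a compact group (or finite group) and ρ, ρ' : G → GL_r(ℂ) semisimple representations. Then ρ and ρ' are locally polyquadratic twists (for every s ∈ G, ρ(s²) and ρ'(s²) have the same characteristic polynomial) if and only if Sym²ρ ⊖ ∧²ρ ≅ Sym²ρ' ⊖ ∧²ρ' as virtual representations, i.e., Sym²ρ ⊕ ∧²ρ' ≅ Sym²ρ' ⊕ ∧²ρ. -/
open CategoryTheory Module Polynomial

variable {G : Type} [Group G]

/-- A quadratic character: a homomorphism to `ℂˣ` whose values square to `1`. -/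
def IsQuadraticChar (χ : G →* ℂˣ) : Prop := ∀ s, χ s * χ s = 1

/-- The twist of a representation by a character. -/
noncomputable def FDRep.twist (χ : G →* ℂˣ) (V : FDRep ℂ G) : FDRep ℂ G :=
  FDRep.of
    { toFun := fun s => (χ s : ℂ) • V.ρ s
      map_one' := by simp
      map_mul' := fun s t => by
        simp only [map_mul, Units.val_mul, mul_smul]
        rw [smul_mul_assoc, mul_smul_comm] }

/-- The direct sum of two finite-dimensional representations. -/
noncomputable def FDRep.dsum (V W : FDRep ℂ G) : FDRep ℂ G :=
  FDRep.of
    { toFun := fun s => LinearMap.prodMap (V.ρ s) (W.ρ s)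
      map_one' := by ext x <;> simp
      map_mul' := fun s t => by ext x <;> simp }

/-- The direct sum of a finite family of finite-dimensional representations. -/
noncomputable def FDRep.dsumFin {t : ℕ} (W : Fin t → FDRep ℂ G) : FDRep ℂ G :=
  FDRep.of (V := ∀ i, W i)
    { toFun := fun s => LinearMap.pi fun i => ((W i).ρ s).comp (LinearMap.proj i)
      map_one' := by ext x i <;> simp
      map_mul' := fun s t => by ext x i <;> simp }

/-- Two representations are polyquadratic twists: they admit direct sum decompositions
whose summands pairwise differ by quadratic characters. -/
noncomputable def IsPolyquadraticTwist (V V' : FDRep ℂ G) : Prop :=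
  ∃ (t : ℕ) (W : Fin t → FDRep ℂ G) (χ : Fin t → (G →* ℂˣ)),
    (∀ i, IsQuadraticChar (χ i)) ∧
    Nonempty (V ≅ FDRep.dsumFin W) ∧
    Nonempty (V' ≅ FDRep.dsumFin fun i => FDRep.twist (χ i) (W i))

/-- Restriction of a representation to a subgroup. -/
noncomputable def FDRep.res (H : Subgroup G) (V : FDRep ℂ G) : FDRep ℂ H :=
  FDRep.of (V.ρ.comp H.subtype)

/-- The one-dimensional representation attached to a character. -/
noncomputable def FDRep.ofChar (χ : G →* ℂˣ) : FDRep ℂ G :=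
  FDRep.of (V := ℂ)
    { toFun := fun s => (χ s : ℂ) • (1 : Module.End ℂ ℂ)
      map_one' := by simp
      map_mul' := fun s t => by
        simp only [map_mul, Units.val_mul, mul_smul]
        rw [smul_mul_assoc, mul_smul_comm, mul_one] }

/-- The characteristic polynomial of the action of a group element. -/
noncomputable def FDRep.cp (V : FDRep ℂ G) (s : G) : Polynomial ℂ :=
  LinearMap.charpoly (V.ρ s)

open TensorProduct

/-- The tensor square of a representation, as a `Representation`. -/
noncomputable def tensorSqRep (V : FDRep ℂ G) : Representation ℂ G (V ⊗[ℂ] V) :=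
  Representation.tprod V.ρ V.ρ

/-- The flip endomorphism of the tensor square. -/
noncomputable def flipMap (V : FDRep ℂ G) : (V ⊗[ℂ] V) →ₗ[ℂ] (V ⊗[ℂ] V) :=
  (TensorProduct.comm ℂ V V).toLinearMap

lemma flip_comm (V : FDRep ℂ G) (s : G) :
    (flipMap V).comp (tensorSqRep V s) = (tensorSqRep V s).comp (flipMap V) := by
  apply TensorProduct.ext'
  intro x y
  simp [flipMap, tensorSqRep, Representation.tprod_apply]

/-- Restriction of a representation to an invariant submodule. -/
noncomputable def Representation.subrep {W : Type} [AddCommGroup W] [Module ℂ W]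
    (ρ : Representation ℂ G W) (p : Submodule ℂ W)
    (h : ∀ s : G, ∀ x ∈ p, ρ s x ∈ p) : Representation ℂ G p where
  toFun s := (ρ s).restrict (h s)
  map_one' := by ext x; simp [LinearMap.restrict_apply]
  map_mul' s t := by ext x; simp [LinearMap.restrict_apply]

/-- The submodule of symmetric tensors. -/
noncomputable def symSubmodule (V : FDRep ℂ G) : Submodule ℂ (V ⊗[ℂ] V) :=
  LinearMap.ker (flipMap V - LinearMap.id)

/-- The submodule of antisymmetric tensors. -/
noncomputable def altSubmodule (V : FDRep ℂ G) : Submodule ℂ (V ⊗[ℂ] V) :=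
  LinearMap.ker (flipMap V + LinearMap.id)

lemma symSubmodule_invariant (V : FDRep ℂ G) :
    ∀ s : G, ∀ x ∈ symSubmodule V, tensorSqRep V s x ∈ symSubmodule V := by
  intro s x hx
  simp only [symSubmodule, LinearMap.mem_ker, LinearMap.sub_apply, LinearMap.id_apply,
    sub_eq_zero] at hx ⊢
  calc flipMap V (tensorSqRep V s x) = tensorSqRep V s (flipMap V x) := by
        have := flip_comm V s
        exact LinearMap.congr_fun this x
    _ = tensorSqRep V s x := by rw [hx]

lemma altSubmodule_invariant (V : FDRep ℂ G) :
    ∀ s : G, ∀ x ∈ altSubmodule V, tensorSqRep V s x ∈ altSubmodule V := by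
  intro s x hx
  simp only [altSubmodule, LinearMap.mem_ker, LinearMap.add_apply, LinearMap.id_apply,
    add_eq_zero_iff_eq_neg] at hx ⊢
  calc flipMap V (tensorSqRep V s x) = tensorSqRep V s (flipMap V x) := by
        have := flip_comm V s
        exact LinearMap.congr_fun this x
    _ = -(tensorSqRep V s x) := by rw [hx]; simp

/-- The symmetric square of a representation. -/
noncomputable def symSq (V : FDRep ℂ G) : FDRep ℂ G :=
  FDRep.of ((tensorSqRep V).subrep (symSubmodule V) (symSubmodule_invariant V))

/-- The exterior (alternating) square of a representation. -/
noncomputable def altSq (V : FDRep ℂ G) : FDRep ℂ G :=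
  FDRep.of ((tensorSqRep V).subrep (altSubmodule V) (altSubmodule_invariant V))

/-!
The flip of `V ⊗ V` acts by `1` on `Sym² V` and by `-1` on `∧² V`, and
`tr (flip ∘ (A ⊗ A)) = tr (A²)`; hence `χ_{Sym² ρ}(s) - χ_{∧² ρ}(s) = χ_ρ(s²)`, and the two
sides have equal characters exactly when `χ_ρ` and `χ_ρ'` agree on squares.

In characteristic zero a representation of a finite group is determined by its character:
`dim Hom(ρ, σ) = ⟨χ_σ, χ_ρ⟩ = dim Hom(ρ, ρ) > 0` gives a nonzero intertwiner `f`, Maschke's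
theorem gives `ρ ≅ ker f ⊕ range f` and `σ ≅ C ⊕ range f`, and `ker f ≅ C` by induction on the
dimension. This yields the isomorphism when the characteristic polynomials (hence the traces) of
`ρ(s²)` and `ρ'(s²)` agree. Conversely, every element of the cyclic group generated by `s²` is a
square, so the restrictions of `ρ` and `ρ'` to it are isomorphic and `ρ(s²)`, `ρ'(s²)` are
conjugate.
-/

namespace LinearMap

variable {K M : Type*} [Field K] [AddCommGroup M] [Module K M]

section FiniteDimensional

variable [FiniteDimensional K M]

theorem trace_eq_neg_charpoly_nextCoeff (f : M →ₗ[K] M) :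
    trace K M f = -f.charpoly.nextCoeff := by
  rw [trace_eq_matrix_trace K (finBasis K M), ← charpoly_toMatrix f (finBasis K M),
    Matrix.trace_eq_neg_charpoly_nextCoeff]

theorem trace_eq_trace_restrict_add_trace_restrict {p q : Submodule K M} (hpq : IsCompl p q)
    (f : M →ₗ[K] M) (hp : ∀ x ∈ p, f x ∈ p) (hq : ∀ x ∈ q, f x ∈ q) :
    trace K M f = trace K p (f.restrict hp) + trace K q (f.restrict hq) := by
  let e := Submodule.prodEquivOfIsCompl p q hpq
  have he : e.symm.conj f = (f.restrict hp).prodMap (f.restrict hq) := by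
    refine LinearMap.ext fun x => e.injective ?_
    simp only [LinearEquiv.conj_apply, comp_apply, LinearEquiv.coe_coe, LinearEquiv.symm_symm,
      LinearEquiv.apply_symm_apply]
    simp [e]
  rw [← trace_conj' f e.symm, he, trace_prodMap']

theorem trace_comm_comp_map (f g : M →ₗ[K] M) :
    trace K (M ⊗[K] M) (TensorProduct.comm K M M ∘ₗ TensorProduct.map f g) =
      trace K M (g ∘ₗ f) := by
  let b := finBasis K M
  rw [trace_eq_matrix_trace K (b.tensorProduct b), trace_eq_matrix_trace K b, toMatrix_comp b b b,
    Matrix.trace, Matrix.trace, Fintype.sum_prod_type]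
  simp [toMatrix_apply, Matrix.mul_apply, mul_comm]

end FiniteDimensional

variable {F : M →ₗ[K] M}

theorem mem_ker_sub_id {x : M} : x ∈ ker (F - id) ↔ F x = x := by
  simp [sub_eq_zero]

theorem mem_ker_add_id {x : M} : x ∈ ker (F + id) ↔ F x = -x := by
  simp [add_eq_zero_iff_eq_neg]

variable [NeZero (2 : K)]

theorem isCompl_ker_sub_id_ker_add_id (hF : F ∘ₗ F = id) :
    IsCompl (ker (F - id)) (ker (F + id)) := by
  have hFF (x : M) : F (F x) = x := congr($hF x)
  constructor
  · refine Submodule.disjoint_def.mpr fun x h₁ h₂ => ?_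
    rw [mem_ker_sub_id] at h₁
    rw [mem_ker_add_id, h₁, eq_neg_iff_add_eq_zero, ← two_smul K] at h₂
    exact (smul_eq_zero.mp h₂).resolve_left two_ne_zero
  · refine codisjoint_iff.mpr (eq_top_iff.mpr fun x _ => ?_)
    have hx : x = (2 : K)⁻¹ • (x + F x) + (2 : K)⁻¹ • (x - F x) := by
      rw [← smul_add, add_add_sub_cancel, ← two_smul K, smul_smul, inv_mul_cancel₀ two_ne_zero,
        one_smul]
    rw [hx]
    refine Submodule.add_mem_sup ?_ ?_
    · rw [mem_ker_sub_id, map_smul, map_add, hFF, add_comm]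
    · rw [mem_ker_add_id, map_smul, map_sub, hFF, ← smul_neg, neg_sub]

theorem trace_comp_eq_trace_restrict_sub_trace_restrict [FiniteDimensional K M]
    (hF : F ∘ₗ F = id) {T : M →ₗ[K] M}
    (hp : ∀ x ∈ ker (F - id), T x ∈ ker (F - id)) (hq : ∀ x ∈ ker (F + id), T x ∈ ker (F + id)) :
    trace K M (F ∘ₗ T) = trace K _ (T.restrict hp) - trace K _ (T.restrict hq) := by
  have hp' : ∀ x ∈ ker (F - id), (F ∘ₗ T) x ∈ ker (F - id) := fun x hx => by
    rw [comp_apply, mem_ker_sub_id.mp (hp x hx)]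
    exact hp x hx
  have hq' : ∀ x ∈ ker (F + id), (F ∘ₗ T) x ∈ ker (F + id) := fun x hx => by
    rw [comp_apply, mem_ker_add_id.mp (hq x hx)]
    exact neg_mem (hq x hx)
  have hrp : (F ∘ₗ T).restrict hp' = T.restrict hp := by
    ext x
    exact mem_ker_sub_id.mp (hp x x.2)
  have hrq : (F ∘ₗ T).restrict hq' = -T.restrict hq := by
    ext x
    exact mem_ker_add_id.mp (hq x x.2)
  rw [trace_eq_trace_restrict_add_trace_restrict (isCompl_ker_sub_id_ker_add_id hF) _ hp' hq',
    hrp, hrq, map_neg, ← sub_eq_add_neg]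

end LinearMap

namespace Subrepresentation

variable {k G V : Type*} [Field k] [Group G] [AddCommGroup V] [Module k V]
  {ρ : Representation k G V} {p q : Subrepresentation ρ}

theorem isCompl_toSubmodule (h : IsCompl p q) : IsCompl p.toSubmodule q.toSubmodule := by
  constructor
  · rw [disjoint_iff, ← toSubmodule_inf, h.inf_eq_bot]
    rfl
  · rw [codisjoint_iff, ← toSubmodule_sup, h.sup_eq_top]
    rfl

theorem character_eq_add_of_isCompl [FiniteDimensional k V] (h : IsCompl p q) (g : G) :
    ρ.character g = p.toRepresentation.character g + q.toRepresentation.character g :=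
  LinearMap.trace_eq_trace_restrict_add_trace_restrict (isCompl_toSubmodule h) _
    (fun _ hx => p.apply_mem_toSubmodule g hx) (fun _ hx => q.apply_mem_toSubmodule g hx)

noncomputable def prodEquivOfIsCompl (h : IsCompl p q) :
    (p.toRepresentation.prod q.toRepresentation).Equiv ρ :=
  .mk (Submodule.prodEquivOfIsCompl _ _ (isCompl_toSubmodule h)) fun g => by
    ext x <;> simp [toRepresentation]

end Subrepresentation

namespace Representation

variable {k G V W : Type*} [Field k] [Group G] [AddCommGroup V] [Module k V] [AddCommGroup W]
  [Module k W] {ρ : Representation k G V} {σ : Representation k G W}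

theorem charpoly_eq_of_equiv [FiniteDimensional k V] [FiniteDimensional k W] (e : ρ.Equiv σ)
    (g : G) : (ρ g).charpoly = (σ g).charpoly := by
  rw [← e.conj_apply_self g, LinearEquiv.charpoly_conj]

noncomputable def Equiv.prodCongr {V' W' : Type*} [AddCommGroup V'] [Module k V']
    [AddCommGroup W'] [Module k W'] {ρ' : Representation k G V'} {σ' : Representation k G W'}
    (e : ρ.Equiv σ) (e' : ρ'.Equiv σ') : (ρ.prod ρ').Equiv (σ.prod σ') :=
  .mk (e.toLinearEquiv.prodCongr e'.toLinearEquiv) fun g => by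
    ext x <;> simp [e.isIntertwining, e'.isIntertwining]

noncomputable def IntertwiningMap.complKerEquivRange (f : ρ.IntertwiningMap σ)
    {p : Subrepresentation ρ} (h : IsCompl f.ker p) :
    p.toRepresentation.Equiv f.range.toRepresentation :=
  let E : p.toSubmodule ≃ₗ[k] f.range.toSubmodule :=
    (Submodule.quotientEquivOfIsCompl _ _ (Subrepresentation.isCompl_toSubmodule h)).symm ≪≫ₗ
      f.toLinearMap.quotKerEquivRange
  have hE (x : p.toSubmodule) : (E x : W) = f x := f.toLinearMap.quotKerEquivRange_apply_mk x
  .mk E fun g => by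
    ext x
    change f (ρ g x) = σ g (E x)
    rw [hE, f.isIntertwining]

variable [CharZero k] [Finite G]

theorem finrank_intertwiningMap_eq_of_character_eq {W' : Type*} [AddCommGroup W'] [Module k W']
    [FiniteDimensional k V] [FiniteDimensional k W] [FiniteDimensional k W']
    {σ' : Representation k G W'} (h : σ.character = σ'.character) :
    finrank k (ρ.IntertwiningMap σ) = finrank k (ρ.IntertwiningMap σ') := by
  have := Fintype.ofFinite G
  have := invertibleOfNonzero (NeZero.ne (Nat.card G : k))
  exact_mod_cast (card_inv_mul_sum_char_mul_char_eq_finrank ρ σ).symm.trans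
    (h ▸ card_inv_mul_sum_char_mul_char_eq_finrank ρ σ')

theorem exists_intertwiningMap_ne_zero_of_character_eq [FiniteDimensional k V]
    [FiniteDimensional k W] [Nontrivial V] (h : ρ.character = σ.character) :
    ∃ f : ρ.IntertwiningMap σ, f ≠ 0 := by
  have : Nontrivial (ρ.IntertwiningMap ρ) := by
    refine ⟨⟨IntertwiningMap.id ρ, 0, fun h0 => ?_⟩⟩
    obtain ⟨v, hv⟩ := exists_ne (0 : V)
    exact hv congr($h0 v)
  have : Nontrivial (ρ.IntertwiningMap σ) := by
    apply Module.nontrivial_of_finrank_pos (R := k)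
    rw [← finrank_intertwiningMap_eq_of_character_eq h]
    exact Module.finrank_pos
  exact exists_ne 0

theorem nonempty_equiv_of_character_eq [FiniteDimensional k V] [FiniteDimensional k W]
    (h : ρ.character = σ.character) : Nonempty (ρ.Equiv σ) := by
  induction hn : finrank k V using Nat.strong_induction_on generalizing V W with
  | _ n ih =>
  rcases subsingleton_or_nontrivial V with hV | hV
  · have : Subsingleton W := by
      have h1 := congr_fun h 1
      rw [char_one, char_one, finrank_zero_of_subsingleton, eq_comm, Nat.cast_inj] at h1
      exact Module.finrank_zero_iff (R := k).mp h1
    exact ⟨.mk (LinearEquiv.ofSubsingleton V W) fun g => Subsingleton.elim _ _⟩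
  obtain ⟨f, hf⟩ := exists_intertwiningMap_ne_zero_of_character_eq h
  obtain ⟨p, hp⟩ := exists_isCompl f.ker
  obtain ⟨q, hq⟩ := exists_isCompl f.range
  have hker : finrank k f.ker.toSubmodule < n := by
    refine hn ▸ Submodule.finrank_lt fun htop => hf ?_
    ext v
    exact (IntertwiningMap.mem_ker _ _ f v).mp (htop ▸ Submodule.mem_top : v ∈ f.ker.toSubmodule)
  have hχ : f.ker.toRepresentation.character = q.toRepresentation.character := by
    funext g
    have hρ := Subrepresentation.character_eq_add_of_isCompl hp g
    have hσ := Subrepresentation.character_eq_add_of_isCompl hq g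
    have hpr := congr_fun (char_iso (f.complKerEquivRange hp)) g
    linear_combination -hρ + hσ + congr_fun h g - hpr
  obtain ⟨e⟩ := ih _ hker hχ rfl
  exact ⟨(Subrepresentation.prodEquivOfIsCompl hp).symm.trans
    ((e.prodCongr (f.complKerEquivRange hp)).trans (Subrepresentation.prodEquivOfIsCompl hq.symm))⟩

theorem charpoly_mul_self_eq_of_character_mul_self_eq [FiniteDimensional k V]
    [FiniteDimensional k W] (h : ∀ s, ρ.character (s * s) = σ.character (s * s)) (s : G) :
    (ρ (s * s)).charpoly = (σ (s * s)).charpoly := by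
  let H := Subgroup.zpowers (s * s)
  have hH : character (ρ.comp H.subtype) = character (σ.comp H.subtype) := by
    funext ⟨_, n, rfl⟩
    change ρ.character ((s * s) ^ n) = σ.character ((s * s) ^ n)
    rw [(Commute.refl s).mul_zpow]
    exact h (s ^ n)
  obtain ⟨e⟩ := nonempty_equiv_of_character_eq hH
  exact charpoly_eq_of_equiv e ⟨s * s, Subgroup.mem_zpowers _⟩

end Representation

namespace FDRep

variable {k G : Type*} [Field k] [Group G]

noncomputable def isoOfEquiv {V W : FDRep k G} (e : Representation.Equiv V.ρ W.ρ) : V ≅ W :=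
  Action.mkIso (LinearEquiv.toFGModuleCatIso e.toLinearEquiv) fun g => by
    ext x
    exact Representation.IntertwiningMap.isIntertwining _ _ e.toIntertwiningMap g x

theorem nonempty_iso_iff_character_eq [CharZero k] [Finite G] {V W : FDRep k G} :
    Nonempty (V ≅ W) ↔ V.character = W.character :=
  ⟨fun ⟨i⟩ => char_iso i,
    fun h => (Representation.nonempty_equiv_of_character_eq (ρ := V.ρ) (σ := W.ρ) h).map isoOfEquiv⟩

end FDRep

theorem FDRep.character_dsum (V W : FDRep ℂ G) (s : G) :
    (FDRep.dsum V W).character s = V.character s + W.character s :=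
  LinearMap.trace_prodMap' _ _

theorem character_symSq_sub_character_altSq (V : FDRep ℂ G) (s : G) :
    (symSq V).character s - (altSq V).character s = V.character (s * s) := by
  have hflip : flipMap V ∘ₗ flipMap V = LinearMap.id := TensorProduct.ext' fun _ _ => rfl
  refine (LinearMap.trace_comp_eq_trace_restrict_sub_trace_restrict hflip
    (symSubmodule_invariant V s) (altSubmodule_invariant V s)).symm.trans ?_
  rw [flipMap, tensorSqRep, Representation.tprod_apply, LinearMap.trace_comm_comp_map,
    ← Module.End.mul_eq_comp, ← map_mul]
  rfl

theorem stmt5_general [Finite G] (ρ ρ' : FDRep ℂ G) :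
    (∀ s : G, FDRep.cp ρ (s * s) = FDRep.cp ρ' (s * s)) ↔
      Nonempty (FDRep.dsum (symSq ρ) (altSq ρ') ≅ FDRep.dsum (symSq ρ') (altSq ρ)) := by
  have hχ (s : G) : (FDRep.dsum (symSq ρ) (altSq ρ')).character s =
      (FDRep.dsum (symSq ρ') (altSq ρ)).character s ↔
        ρ.character (s * s) = ρ'.character (s * s) := by
    rw [FDRep.character_dsum, FDRep.character_dsum, ← character_symSq_sub_character_altSq,
      ← character_symSq_sub_character_altSq]
    constructor <;> intro h <;> linear_combination h
  rw [FDRep.nonempty_iso_iff_character_eq, funext_iff]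
  simp only [hχ]
  refine ⟨fun h s => ?_, Representation.charpoly_mul_self_eq_of_character_mul_self_eq⟩
  rw [FDRep.character, FDRep.character, LinearMap.trace_eq_neg_charpoly_nextCoeff,
    LinearMap.trace_eq_neg_charpoly_nextCoeff]
  exact congrArg (- ·.nextCoeff) (h s)

/-- Two representations are locally polyquadratic twists (the characteristic polynomials
of `ρ(s²)` and `ρ'(s²)` agree for all `s`) if and only if
`Sym²ρ ⊖ ∧²ρ ≅ Sym²ρ' ⊖ ∧²ρ'` as virtual representations, i.e.
`Sym²ρ ⊕ ∧²ρ' ≅ Sym²ρ' ⊕ ∧²ρ`. -/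
theorem stmt5 [Finite G] (r : ℕ) (ρ ρ' : FDRep ℂ G)
    (hr : finrank ℂ ρ = r) (hr' : finrank ℂ ρ' = r) :
    (∀ s : G, FDRep.cp ρ (s * s) = FDRep.cp ρ' (s * s)) ↔
      Nonempty (FDRep.dsum (symSq ρ) (altSq ρ') ≅ FDRep.dsum (symSq ρ') (altSq ρ)) :=
  stmt5_general ρ ρ'
end

section
/- Let G be the group with GAP identifier ⟨48,3⟩ and let ρ, ρ' be two nonisomorphic faithful irreducible 3-dimensional complex representations of G. Then for every s ∈ G, the matrices ρ(s²) and ρ'(s²) have the same characteristic polynomial, yet ρ and ρ' are not polyquadratic twists (there is no quadratic character χ of G with ρ' ≅ χ ⊗ ρ, and since ρ is irreducible, no finer decomposition exists). -/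
open CategoryTheory Module Polynomial

variable {G : Type} [Group G]

abbrev N48 := Multiplicative (ZMod 4 × ZMod 4)

/-- The order-3 automorphism `(a, b) ↦ (b, -a-b)` of `(ℤ/4)²`. -/
def cycAut : MulAut N48 :=
  AddEquiv.toMultiplicative
    { toFun := fun p => (p.2, -p.1 - p.2)
      invFun := fun p => (-p.1 - p.2, p.1)
      left_inv := by decide
      right_inv := by decide
      map_add' := by decide }

lemma cycAut_cube : cycAut ^ 3 = 1 := by
  ext p <;> revert p <;> decide

/-- The action of `ℤ/3` on `(ℤ/4)²` through `cycAut`. -/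
def phi48 : Multiplicative (ZMod 3) →* MulAut N48 :=
  AddMonoidHom.toMultiplicativeLeft
    (ZMod.lift 3 ⟨zmultiplesHom (Additive (MulAut N48)) (Additive.ofMul cycAut), by
      rw [zmultiplesHom_apply, natCast_zsmul]; exact congrArg Additive.ofMul cycAut_cube⟩)

/-- The group with GAP identifier ⟨48,3⟩, presented as `(C₄ × C₄) ⋊ C₃`. -/
abbrev G48 := N48 ⋊[phi48] Multiplicative (ZMod 3)

/-!
Write `G = N ⋊ C₃` with `N = C₄ × C₄`. Every element of `G` is a product of two elements of
order dividing 3, so `G` has no nontrivial quadratic character and a polyquadratic twist of `ρ`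
is isomorphic to `ρ`.

Squares in `G` satisfy `g⁶ = 1`, i.e. they avoid the elements of order 4, and there the
character of a faithful irreducible representation is forced. If a normal subgroup `H` acts
nontrivially on a simple `V`, Schur's lemma kills `∑_{h ∈ H} ρ(h)`, hence
`∑_{h ∈ H} χ(h g) = 0`. For `H = N` each coset `N g ≠ N` is a single conjugacy class, so `χ`
vanishes off `N`; for `H` the Klein four-group of involutions, whose nontrivial elements `C₃`
permutes transitively, `χ(1) + 3 χ(x) = 0`. In dimension 3 the characteristic polynomial is
determined by the traces of the first three powers (Newton's identities).
-/
namespace Matrix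

variable {R : Type*} [CommRing R]

lemma charpoly_fin_three (A : Matrix (Fin 3) (Fin 3) R) :
    A.charpoly = X ^ 3 - C A.trace * X ^ 2
      + C (A 0 0 * A 1 1 - A 0 1 * A 1 0 + A 0 0 * A 2 2 - A 0 2 * A 2 0
        + A 1 1 * A 2 2 - A 1 2 * A 2 1) * X - C A.det := by
  simp [charpoly, det_fin_three, trace_fin_three]
  ring

lemma two_mul_sum_minors_fin_three (A : Matrix (Fin 3) (Fin 3) R) :
    2 * (A 0 0 * A 1 1 - A 0 1 * A 1 0 + A 0 0 * A 2 2 - A 0 2 * A 2 0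
        + A 1 1 * A 2 2 - A 1 2 * A 2 1) = A.trace ^ 2 - (A ^ 2).trace := by
  simp [trace_fin_three, sq, mul_apply, Fin.sum_univ_three]
  ring

lemma six_mul_det_fin_three (A : Matrix (Fin 3) (Fin 3) R) :
    6 * A.det = A.trace ^ 3 - 3 * A.trace * (A ^ 2).trace + 2 * (A ^ 3).trace := by
  simp [trace_fin_three, pow_succ, mul_apply, Fin.sum_univ_three, det_fin_three]
  ring

lemma charpoly_fin_three_eq_trace_pow {K : Type*} [Field K] [CharZero K]
    (A : Matrix (Fin 3) (Fin 3) K) :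
    A.charpoly = X ^ 3 - C A.trace * X ^ 2 + C ((A.trace ^ 2 - (A ^ 2).trace) / 2) * X
      - C ((A.trace ^ 3 - 3 * A.trace * (A ^ 2).trace + 2 * (A ^ 3).trace) / 6) := by
  rw [charpoly_fin_three, ← two_mul_sum_minors_fin_three, ← six_mul_det_fin_three]
  field_simp

end Matrix

namespace LinearMap

variable {K : Type*} [Field K] [CharZero K]
  {W : Type*} [AddCommGroup W] [Module K W] [FiniteDimensional K W]

lemma charpoly_eq_of_finrank_eq_three (hW : finrank K W = 3) (f : Module.End K W) :
    f.charpoly = X ^ 3 - C (trace K W f) * X ^ 2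
      + C ((trace K W f ^ 2 - trace K W (f ^ 2)) / 2) * X
      - C ((trace K W f ^ 3 - 3 * trace K W f * trace K W (f ^ 2)
        + 2 * trace K W (f ^ 3)) / 6) := by
  let b : Basis (Fin 3) K W := finBasisOfFinrankEq K W hW
  rw [← charpoly_toMatrix f b]
  simp only [trace_eq_matrix_trace K b, ← toMatrix_pow]
  exact Matrix.charpoly_fin_three_eq_trace_pow _

lemma charpoly_eq_of_trace_pow_eq {W' : Type*} [AddCommGroup W'] [Module K W']
    [FiniteDimensional K W'] (hW : finrank K W = 3) (hW' : finrank K W' = 3)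
    (f : Module.End K W) (g : Module.End K W')
    (h : ∀ k ≤ 3, trace K W (f ^ k) = trace K W' (g ^ k)) : f.charpoly = g.charpoly := by
  have h1 : trace K W f = trace K W' g := by simpa using h 1 (by norm_num)
  rw [charpoly_eq_of_finrank_eq_three hW, charpoly_eq_of_finrank_eq_three hW', h1,
    h 2 (by norm_num), h 3 le_rfl]

end LinearMap

namespace FDRep

variable {k : Type*} [Field k] (V : FDRep k G) [Simple V]
  (H : Subgroup G) [H.Normal] [Fintype H]

lemma sum_subgroup_eq_zero (hH : ∃ h ∈ H, V.ρ h ≠ 1) : ∑ h : H, V.ρ h = 0 := by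
  obtain ⟨h₀, hh₀, hne⟩ := hH
  set P := ∑ h : H, V.ρ h
  have hcomm (g : G) : P * V.ρ g = V.ρ g * P := by
    simp only [P, Finset.sum_mul, Finset.mul_sum, ← map_mul]
    exact Fintype.sum_equiv (MulAut.conjNormal g⁻¹).toEquiv _ _ fun h => by simp [mul_assoc]
  have habsorb : V.ρ h₀ * P = P := by
    simp only [P, Finset.mul_sum, ← map_mul]
    exact Fintype.sum_equiv (Equiv.mulLeft ⟨h₀, hh₀⟩) _ _ fun _ => rfl
  -- Schur: a nonzero `G`-endomorphism of the simple `V` is onto, and `h₀` fixes its image.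
  by_contra hP
  let f : V ⟶ V :=
    ⟨FGModuleCat.ofHom P, fun g => by ext v; exact LinearMap.congr_fun (hcomm g) v⟩
  have : IsIso f :=
    isIso_of_hom_simple fun hf => hP (congrArg (fun φ : V ⟶ V => φ.hom.hom.hom) hf)
  have hsurj : Function.Surjective P := (isoToLinearEquiv (asIso f)).surjective
  exact hne ((LinearMap.cancel_right hsurj).1 habsorb)

lemma sum_character_mul_eq_zero (hH : ∃ h ∈ H, V.ρ h ≠ 1) (g : G) :
    ∑ h : H, V.character (h * g) = 0 := by
  simp only [character, map_mul, ← map_sum, ← Finset.sum_mul, sum_subgroup_eq_zero V H hH,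
    zero_mul, map_zero]

lemma finrank_add_mul_character_eq_zero (hH : ∃ h ∈ H, V.ρ h ≠ 1) {x : G}
    (hconj : ∀ y ∈ H, y ≠ 1 → IsConj x y) :
    (finrank k V : k) + (Fintype.card H - 1 : ℕ) * V.character x = 0 := by
  classical
  have hconst : ∀ y ∈ (Finset.univ : Finset H).erase 1, V.character y = V.character x := by
    intro y hy
    obtain ⟨c, hc⟩ := isConj_iff.1 (hconj y y.2 (by simpa using hy))
    rw [← hc, char_conj]
  have hsum := sum_character_mul_eq_zero V H hH 1
  simp only [mul_one] at hsum
  rw [← Finset.add_sum_erase _ _ (Finset.mem_univ 1), Finset.sum_congr rfl hconst,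
    Finset.sum_const, Finset.card_erase_of_mem (Finset.mem_univ _), Finset.card_univ,
    nsmul_eq_mul, OneMemClass.coe_one, char_one] at hsum
  exact hsum

variable [CharZero k]

lemma character_eq_zero_of_isConj_mul (hH : ∃ h ∈ H, V.ρ h ≠ 1) {g : G}
    (hg : ∀ h ∈ H, IsConj g (h * g)) : V.character g = 0 := by
  have hconst (h : H) : V.character (h * g) = V.character g := by
    obtain ⟨c, hc⟩ := isConj_iff.1 (hg h h.2)
    rw [← hc, char_conj]
  have hsum := sum_character_mul_eq_zero V H hH g
  simp only [hconst, Finset.sum_const, Finset.card_univ, nsmul_eq_mul] at hsum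
  exact (mul_eq_zero.1 hsum).resolve_left (Nat.cast_ne_zero.2 Fintype.card_ne_zero)

end FDRep

lemma IsQuadraticChar.apply_eq_one_of_pow_eq_one {χ : G →* ℂˣ} (hχ : IsQuadraticChar χ)
    {g : G} {n : ℕ} (hn : Odd n) (hg : g ^ n = 1) : χ g = 1 := by
  obtain ⟨m, rfl⟩ := hn
  have := congrArg χ hg
  rwa [map_pow, pow_succ, pow_mul, sq, hχ, one_pow, one_mul, map_one] at this

namespace FDRep

noncomputable def twistOneIso (V : FDRep ℂ G) : twist 1 V ≅ V :=
  Action.mkIso (Iso.refl _) fun g => by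
    ext v
    change ((1 : ℂˣ) : ℂ) • V.ρ g v = V.ρ g v
    simp

noncomputable def dsumFinCongr {t : ℕ} {W W' : Fin t → FDRep ℂ G} (e : ∀ i, W i ≅ W' i) :
    dsumFin W ≅ dsumFin W' :=
  Action.mkIso
    (LinearEquiv.toFGModuleCatIso (LinearEquiv.piCongrRight fun i => isoToLinearEquiv (e i)))
    fun g => by
      ext v
      funext i
      exact LinearMap.congr_fun (congrArg (fun φ => φ.hom.hom) ((e i).hom.comm g)) (v i)

end FDRep

lemma IsPolyquadraticTwist.nonempty_iso (hχ : ∀ χ : G →* ℂˣ, IsQuadraticChar χ → χ = 1)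
    {V V' : FDRep ℂ G} (h : IsPolyquadraticTwist V V') : Nonempty (V ≅ V') := by
  obtain ⟨t, W, χ, hq, ⟨e⟩, ⟨e'⟩⟩ := h
  obtain rfl : χ = 1 := funext fun i => hχ _ (hq i)
  exact ⟨e ≪≫ (FDRep.dsumFinCongr fun i => FDRep.twistOneIso (W i)).symm ≪≫ e'.symm⟩

open Multiplicative SemidirectProduct

instance : Fintype G48 :=
  Fintype.ofEquiv (N48 × Multiplicative (ZMod 3))
    ⟨fun p => ⟨p.1, p.2⟩, fun g => (g.left, g.right), fun _ => rfl, fun _ => rfl⟩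

namespace G48

/-- In this group `{g | g * g = 1}` is a subgroup, the Klein four-group `2N` of `N = C₄ × C₄`,
because the elements outside `N` have order 3. -/
def twoTorsion : Subgroup G48 where
  carrier := {g | g * g = 1}
  one_mem' := mul_one 1
  mul_mem' {a b} := by
    have h : ∀ a b : G48, a * a = 1 → b * b = 1 → a * b * (a * b) = 1 := by decide
    exact h a b
  inv_mem' {a} (ha : a * a = 1) := by
    change a⁻¹ * a⁻¹ = 1
    rw [← mul_inv_rev, ha, inv_one]

instance : twoTorsion.Normal where
  conj_mem a (ha : a * a = 1) g := by
    change g * a * g⁻¹ * (g * a * g⁻¹) = 1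
    rw [show g * a * g⁻¹ * (g * a * g⁻¹) = g * (a * a) * g⁻¹ by group, ha, mul_one,
      mul_inv_cancel]

instance : DecidablePred (· ∈ twoTorsion) := fun g => inferInstanceAs (Decidable (g * g = 1))

lemma card_twoTorsion : Fintype.card twoTorsion = 4 := by decide

lemma mul_self_pow_six (g : G48) : (g * g) ^ 6 = 1 := by
  revert g; decide

lemma mem_twoTorsion_or_right_ne_one {g : G48} (hg : g ^ 6 = 1) :
    g ∈ twoTorsion ∨ g.right ≠ 1 := by
  revert g; decide

set_option maxRecDepth 4000 in
lemma isConj_of_mem_twoTorsion {x y : G48} (hx : x ∈ twoTorsion) (hy : y ∈ twoTorsion)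
    (hx1 : x ≠ 1) (hy1 : y ≠ 1) : IsConj x y := by
  revert x y; decide

set_option maxRecDepth 4000 in
lemma isConj_inr_right {g : G48} (hg : g.right ≠ 1) : IsConj (inr g.right) g := by
  revert g; decide

lemma isConj_mul_of_right_ne_one {g h : G48} (hg : g.right ≠ 1) (hh : h ∈ rightHom.ker) :
    IsConj g (h * g) := by
  rw [MonoidHom.mem_ker, rightHom_eq_right] at hh
  have hhg : (h * g).right = g.right := by rw [mul_right, hh, one_mul]
  exact (isConj_inr_right hg).symm.trans (hhg ▸ isConj_inr_right (hhg ▸ hg))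

lemma exists_mul_of_pow_three_eq_one (g : G48) :
    ∃ a b : G48, a ^ 3 = 1 ∧ b ^ 3 = 1 ∧ a * b = g := by
  have hc : (inr (ofAdd 1) : G48) ^ 3 = 1 := by decide
  have h : ∀ g : G48, (g * inr (ofAdd 1)) ^ 3 = 1 ∨ (g * (inr (ofAdd 1))⁻¹) ^ 3 = 1 := by
    decide
  rcases h g with h | h
  · exact ⟨_, _, h, by rw [inv_pow, hc, inv_one], mul_inv_cancel_right g _⟩
  · exact ⟨_, _, h, hc, inv_mul_cancel_right g _⟩

lemma isQuadraticChar_eq_one {χ : G48 →* ℂˣ} (hχ : IsQuadraticChar χ) : χ = 1 := by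
  ext1 g
  obtain ⟨a, b, ha, hb, rfl⟩ := exists_mul_of_pow_three_eq_one g
  rw [MonoidHom.one_apply, map_mul, hχ.apply_eq_one_of_pow_eq_one ⟨1, rfl⟩ ha,
    hχ.apply_eq_one_of_pow_eq_one ⟨1, rfl⟩ hb, one_mul]

variable {k : Type*} [Field k] (V : FDRep k G48) [Simple V]

lemma finrank_add_three_mul_character (hV : Function.Injective V.ρ) {x : G48}
    (hx : x ∈ twoTorsion) (hx1 : x ≠ 1) : (finrank k V : k) + 3 * V.character x = 0 := by
  have h := FDRep.finrank_add_mul_character_eq_zero V twoTorsion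
    ⟨inl (ofAdd (2, 0)), by decide, (map_ne_one_iff V.ρ hV).2 (by decide)⟩
    fun y hy hy1 => isConj_of_mem_twoTorsion hx hy hx1 hy1
  rwa [card_twoTorsion, show ((4 - 1 : ℕ) : k) = 3 by norm_num] at h

variable [CharZero k]

lemma character_eq_zero_of_right_ne_one (hV : Function.Injective V.ρ) {g : G48}
    (hg : g.right ≠ 1) : V.character g = 0 :=
  FDRep.character_eq_zero_of_isConj_mul V rightHom.ker
    ⟨inl (ofAdd (2, 0)), by decide, (map_ne_one_iff V.ρ hV).2 (by decide)⟩
    fun _ => isConj_mul_of_right_ne_one hg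

lemma character_eq_of_pow_six_eq_one (V' : FDRep k G48) [Simple V']
    (hV : Function.Injective V.ρ) (hV' : Function.Injective V'.ρ)
    (hfin : finrank k V = finrank k V') {g : G48} (hg : g ^ 6 = 1) :
    V.character g = V'.character g := by
  rcases mem_twoTorsion_or_right_ne_one hg with hK | hr
  · obtain rfl | hg1 := eq_or_ne g 1
    · rw [FDRep.char_one, FDRep.char_one, hfin]
    · have h := finrank_add_three_mul_character V hV hK hg1
      have h' := finrank_add_three_mul_character V' hV' hK hg1
      rw [hfin] at h
      linear_combination (h - h') / 3
  · rw [character_eq_zero_of_right_ne_one V hV hr, character_eq_zero_of_right_ne_one V' hV' hr]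

end G48

/-- For the group `⟨48,3⟩ = (C₄ × C₄) ⋊ C₃`, any two nonisomorphic faithful irreducible
3-dimensional representations `ρ, ρ'` satisfy that `ρ(s²)` and `ρ'(s²)` have the same
characteristic polynomial for every `s`, yet `ρ` and `ρ'` are not polyquadratic
twists. -/
theorem stmt8 (ρ ρ' : FDRep ℂ G48)
    (h3 : finrank ℂ ρ = 3) (h3' : finrank ℂ ρ' = 3)
    (hs : Simple ρ) (hs' : Simple ρ')
    (hfaith : Function.Injective ρ.ρ) (hfaith' : Function.Injective ρ'.ρ)
    (hniso : ¬ Nonempty (ρ ≅ ρ')) :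
    (∀ s : G48, FDRep.cp ρ (s * s) = FDRep.cp ρ' (s * s)) ∧
    ¬ IsPolyquadraticTwist ρ ρ' := by
  refine ⟨fun s => ?_, fun htwist =>
    hniso (htwist.nonempty_iso fun _ => G48.isQuadraticChar_eq_one)⟩
  refine LinearMap.charpoly_eq_of_trace_pow_eq h3 h3' _ _ fun n _ => ?_
  rw [← map_pow, ← map_pow]
  exact G48.character_eq_of_pow_six_eq_one ρ ρ' hfaith hfaith' (h3.trans h3'.symm)
    (by rw [← pow_mul, mul_comm, pow_mul, G48.mul_self_pow_six, one_pow])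
end

section
/- Let G be a finite group and ρ, ρ' : G → GL_2(ℂ) semisimple representations such that for every s ∈ G the characteristic polynomials of ρ(s²) and ρ'(s²) coincide, and suppose the quadratic character ε = det(ρ')/det(ρ) is nontrivial. Then both ρ and ρ' are reducible; in fact the multiplicity of the trivial representation in ad⁰(ρ') = (ρ' ⊗ ρ'∨) ⊖ 1 is at least 1. -/
open CategoryTheory Module Polynomial

variable {G : Type} [Group G]

/-- A representation is reducible if it has a nontrivial proper invariant subspace. -/
def FDRep.Reducible (V : FDRep ℂ G) : Prop :=
  ∃ p : Submodule ℂ V, (∀ s : G, ∀ x ∈ p, V.ρ s x ∈ p) ∧ p ≠ ⊥ ∧ p ≠ ⊤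

/-!
The multiplicity of the trivial representation in `End ρ'` is `|G|⁻¹ ∑ χ'(g⁻¹) χ'(g)`. In dimension
two, `χ(g⁻¹) = χ(g) / det ρ(g)` and `tr ρ(g²) = χ(g)² - 2 det ρ(g)`, so the hypothesis on squares
gives, with `ε = det ρ' / det ρ`, the pointwise identity
`χ'(g⁻¹) χ'(g) = ε(g) χ(g⁻¹) χ(g) + 2 - 2 ε(g)`.
Averaging over `G`, the nontrivial character `ε` sums to zero and the first term averages to
`dim Hom_G(ρ, ρ ⊗ ε) ≥ 0`, so `dim End_G(ρ') ≥ 2`; likewise for `ρ`. A two-dimensional commutant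
contains a nonzero traceless element, which is not scalar, and its eigenspaces are proper
invariant subspaces.
-/

namespace LinearMap

variable {K W : Type*} [Field K] [AddCommGroup W] [Module K W] [FiniteDimensional K W]

theorem charpoly_of_finrank_eq_two (hW : finrank K W = 2) (f : End K W) :
    f.charpoly = X ^ 2 - C (trace K W f) * X + C (LinearMap.det f) := by
  let b := finBasisOfFinrankEq K W hW
  rw [← f.charpoly_toMatrix b, Matrix.charpoly_fin_two, trace_eq_matrix_trace K b, det_toMatrix]

theorem mul_self_sub_trace_smul_add_det_smul (hW : finrank K W = 2) (f : End K W) :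
    f * f - trace K W f • f + LinearMap.det f • 1 = 0 := by
  simpa [charpoly_of_finrank_eq_two hW, Algebra.smul_def, sq] using f.aeval_self_charpoly

theorem trace_mul_self_of_finrank_eq_two (hW : finrank K W = 2) (f : End K W) :
    trace K W (f * f) = trace K W f ^ 2 - 2 * LinearMap.det f := by
  have := congrArg (trace K W) (mul_self_sub_trace_smul_add_det_smul hW f)
  simp only [map_add, map_sub, map_smul, trace_one, hW, map_zero, smul_eq_mul] at this
  push_cast at this
  linear_combination this

theorem det_mul_trace_of_mul_eq_one (hW : finrank K W = 2) {f g : End K W} (hfg : f * g = 1) :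
    LinearMap.det f * trace K W g = trace K W f := by
  have := congrArg (fun h => trace K W (h * g)) (mul_self_sub_trace_smul_add_det_smul hW f)
  simp only [add_mul, sub_mul, mul_assoc, hfg, mul_one, smul_mul_assoc, one_mul, map_add, map_sub,
    map_smul, trace_one, hW, zero_mul, map_zero, smul_eq_mul] at this
  push_cast at this
  linear_combination this

theorem trace_eq_of_charpoly_eq {W' : Type*} [AddCommGroup W'] [Module K W']
    [FiniteDimensional K W'] (hW : finrank K W = 2) (hW' : finrank K W' = 2)
    {f : End K W} {f' : End K W'} (hff' : f.charpoly = f'.charpoly) :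
    trace K W f = trace K W' f' := by
  have := congrArg (coeff · 1) hff'
  simpa [charpoly_of_finrank_eq_two, hW, hW'] using this

theorem det_eq_of_charpoly_eq {W' : Type*} [AddCommGroup W'] [Module K W']
    [FiniteDimensional K W'] (hW : finrank K W = 2) (hW' : finrank K W' = 2)
    {f : End K W} {f' : End K W'} (hff' : f.charpoly = f'.charpoly) :
    LinearMap.det f = LinearMap.det f' := by
  rw [det_eq_sign_charpoly_coeff, det_eq_sign_charpoly_coeff, hff', hW, hW']

theorem exists_ne_zero_trace_eq_zero_of_two_le_finrank (S : Submodule K (End K W))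
    (hS : 2 ≤ finrank K S) : ∃ f ∈ S, f ≠ 0 ∧ trace K W f = 0 := by
  have hker : ker ((trace K W).domRestrict S) ≠ ⊥ :=
    ker_ne_bot_of_finrank_lt (by rw [finrank_self]; exact hS)
  obtain ⟨⟨f, hfS⟩, hf, hf0⟩ := Submodule.exists_mem_ne_zero_of_ne_bot hker
  exact ⟨f, hfS, fun h0 => hf0 (Subtype.ext h0), hf⟩

theorem ne_smul_one_of_trace_eq_zero (hW : (finrank K W : K) ≠ 0) {f : End K W}
    (hf0 : f ≠ 0) (hf : trace K W f = 0) (c : K) : f ≠ c • 1 := by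
  rintro rfl
  rw [map_smul, trace_one, smul_eq_mul, mul_eq_zero] at hf
  exact hf0 (by rw [hf.resolve_right hW, zero_smul])

end LinearMap

namespace FDRep

open Representation

noncomputable def detChar (V : FDRep ℂ G) : G →* ℂˣ :=
  (Units.map LinearMap.det).comp V.ρ.toHomUnits

@[simp] theorem detChar_apply (V : FDRep ℂ G) (g : G) :
    (V.detChar g : ℂ) = LinearMap.det (V.ρ g) := rfl

@[simp] theorem char_twist (χ : G →* ℂˣ) (V : FDRep ℂ G) (g : G) :
    (V.twist χ).character g = χ g * V.character g :=
  (LinearMap.trace ℂ V).map_smul (χ g : ℂ) (V.ρ g)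

theorem mem_invariants_linHom_self_iff {k : Type*} [Field k] (V : FDRep k G) (f : End k V) :
    f ∈ (linHom V.ρ V.ρ).invariants ↔ ∀ g, V.ρ g ∘ₗ f = f ∘ₗ V.ρ g :=
  forall_congr' fun g =>
    (linHom.mem_invariants_iff_comm (X := Rep.of V.ρ) (Y := Rep.of V.ρ) f g).trans eq_comm

theorem reducible_of_commute (V : FDRep ℂ G) {f : End ℂ V} (hf : ∀ c : ℂ, f ≠ c • 1)
    (hcomm : ∀ g, V.ρ g ∘ₗ f = f ∘ₗ V.ρ g) : V.Reducible := by
  have : Nontrivial V := by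
    by_contra hW
    rw [not_nontrivial_iff_subsingleton] at hW
    exact hf 0 (Subsingleton.elim _ _)
  obtain ⟨c, hc⟩ := Module.End.exists_eigenvalue f
  refine ⟨f.eigenspace c, fun g x hx => ?_, hc, fun htop => hf c ?_⟩
  · rw [Module.End.mem_eigenspace_iff] at hx ⊢
    rw [← LinearMap.comp_apply, ← hcomm, LinearMap.comp_apply, hx, map_smul]
  · ext x
    simpa using Module.End.mem_eigenspace_iff.mp (htop ▸ Submodule.mem_top : x ∈ f.eigenspace c)

section FinrankTwo

variable {V V' : FDRep ℂ G} (hV : finrank ℂ V = 2) (hV' : finrank ℂ V' = 2)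
  (h : ∀ g : G, (V.ρ (g * g)).charpoly = (V'.ρ (g * g)).charpoly)
include hV hV' h

-- Both sides equal `(χ(g)² - 2 det ρ(g)) / det ρ'(g) + 2`, since `χ(g⁻¹) = χ(g) / det ρ(g)` and
-- `det ρ'(g)² = det ρ(g)²`.
theorem char_inv_mul_char_of_charpoly_sq_eq (g : G) :
    V'.character g⁻¹ * V'.character g =
      ((V'.detChar / V.detChar) g : ℂ) * (V.character g⁻¹ * V.character g) + 2
        - 2 * ((V'.detChar / V.detChar) g : ℂ) := by
  have htr : V.character g ^ 2 - 2 * LinearMap.det (V.ρ g) =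
      V'.character g ^ 2 - 2 * LinearMap.det (V'.ρ g) := by
    simpa only [character, map_mul V.ρ, map_mul V'.ρ, LinearMap.trace_mul_self_of_finrank_eq_two,
      hV, hV'] using LinearMap.trace_eq_of_charpoly_eq hV hV' (h g)
  have hdet : LinearMap.det (V.ρ g) ^ 2 = LinearMap.det (V'.ρ g) ^ 2 := by
    simpa only [map_mul V.ρ, map_mul V'.ρ, map_mul LinearMap.det, sq]
      using LinearMap.det_eq_of_charpoly_eq hV hV' (h g)
  have hinv : LinearMap.det (V.ρ g) * V.character g⁻¹ = V.character g :=
    LinearMap.det_mul_trace_of_mul_eq_one hV (map_mul_eq_one V.ρ (mul_inv_cancel g))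
  have hinv' : LinearMap.det (V'.ρ g) * V'.character g⁻¹ = V'.character g :=
    LinearMap.det_mul_trace_of_mul_eq_one hV' (map_mul_eq_one V'.ρ (mul_inv_cancel g))
  have hd' : LinearMap.det (V'.ρ g) ≠ 0 := (V'.detChar g).ne_zero
  have hd : LinearMap.det (V.ρ g) ≠ 0 := (V.detChar g).ne_zero
  simp only [MonoidHom.div_apply, Units.val_div_eq_div_val, detChar_apply]
  set d := LinearMap.det (V.ρ g)
  set d' := LinearMap.det (V'.ρ g)
  field_simp
  apply mul_left_cancel₀ hd'
  linear_combination d * V'.character g * hinv' - V.character g * d * hinv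
    + (V.character g * V.character g⁻¹ - 2) * hdet - d * htr

theorem two_le_finrank_invariants_linHom [Fintype G] (hε : V'.detChar ≠ V.detChar) :
    2 ≤ finrank ℂ (linHom V'.ρ V'.ρ).invariants := by
  let ε := V'.detChar / V.detChar
  have : Invertible (Nat.card G : ℂ) := invertibleOfNonzero (Nat.cast_ne_zero.mpr Nat.card_pos.ne')
  have hsum_ε : ∑ g, (ε g : ℂ) = 0 :=
    sum_hom_units_eq_zero ((Units.coeHom ℂ).comp ε) fun h1 => hε <|
      div_eq_one.mp <| MonoidHom.ext fun g => Units.ext (DFunLike.congr_fun h1 g)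
  have key : (finrank ℂ (linHom V'.ρ V'.ρ).invariants : ℂ) =
      finrank ℂ (linHom V.ρ (V.twist ε).ρ).invariants + 2 := by
    have hV'V' := average_char_eq_finrank_invariants (of (linHom V'.ρ V'.ρ))
    have hVVε := average_char_eq_finrank_invariants (of (linHom V.ρ (V.twist ε).ρ))
    rw [of_ρ'] at hV'V' hVVε
    rw [← hV'V', ← hVVε]
    simp only [char_linHom, char_twist, mul_left_comm (V.character _),
      char_inv_mul_char_of_charpoly_sq_eq hV hV' h, Finset.sum_sub_distrib,
      Finset.sum_add_distrib, ← Finset.mul_sum, Finset.sum_const, Finset.card_univ,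
      ← Nat.card_eq_fintype_card, nsmul_eq_mul]
    rw [hsum_ε]
    field_simp
    ring
  have : finrank ℂ (linHom V'.ρ V'.ρ).invariants =
      finrank ℂ (linHom V.ρ (V.twist ε).ρ).invariants + 2 := by exact_mod_cast key
  omega

end FinrankTwo
end FDRep

open FDRep

/-- If `ρ(s²)` and `ρ'(s²)` have the same characteristic polynomial for all `s` and the
quadratic character `det ρ' / det ρ` is nontrivial, then both `ρ` and `ρ'` are
reducible; in fact `ad⁰(ρ')` contains the trivial representation, i.e. there is a
nonzero traceless endomorphism commuting with the action of `ρ'`. -/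
theorem stmt12 [Finite G] (ρ ρ' : FDRep ℂ G)
    (h2 : finrank ℂ ρ = 2) (h2' : finrank ℂ ρ' = 2)
    (h : ∀ s : G, FDRep.cp ρ (s * s) = FDRep.cp ρ' (s * s))
    (hε : ∃ s : G, LinearMap.det (ρ'.ρ s) ≠ LinearMap.det (ρ.ρ s)) :
    FDRep.Reducible ρ ∧ FDRep.Reducible ρ' ∧
    ∃ f : Module.End ℂ ρ', LinearMap.trace ℂ ρ' f = 0 ∧ f ≠ 0 ∧
      ∀ s : G, (ρ'.ρ s) ∘ₗ f = f ∘ₗ (ρ'.ρ s) := by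
  have := Fintype.ofFinite G
  have hdet : ρ'.detChar ≠ ρ.detChar := by
    obtain ⟨s, hs⟩ := hε
    exact fun heq => hs (by rw [← detChar_apply, heq, detChar_apply])
  obtain ⟨f, hf, hf0, htr⟩ := LinearMap.exists_ne_zero_trace_eq_zero_of_two_le_finrank _
    (two_le_finrank_invariants_linHom h2' h2 (fun s => (h s).symm) hdet.symm)
  obtain ⟨f', hf', hf'0, htr'⟩ := LinearMap.exists_ne_zero_trace_eq_zero_of_two_le_finrank _
    (two_le_finrank_invariants_linHom h2 h2' h hdet)
  rw [mem_invariants_linHom_self_iff] at hf hf'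
  refine ⟨ρ.reducible_of_commute ?_ hf, ρ'.reducible_of_commute ?_ hf', f', htr', hf'0, hf'⟩
  · exact LinearMap.ne_smul_one_of_trace_eq_zero (by simp [h2]) hf0 htr
  · exact LinearMap.ne_smul_one_of_trace_eq_zero (by simp [h2']) hf'0 htr'
end
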